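/- Let T' be a proper m-ary tree in T(D) obtained from T ∈ T(D) by adding all m children to a leaf s of T at depth ≤ D−2. Then the posterior odds satisfy π(T'|x)/π(T|x) = ((1 − P_{b,s})/P_{b,s})·Π_{j=0}^{m−1} P_{b,sj}, where P_{b,s} = β P_{e,s}/P_{w,s} are the branching probabilities; if instead s is at depth D−1, then π(T'|x)/π(T|x) = (1 − P_{b,s})/P_{b,s}. -/
import Mathlib


open MeasureTheory Filter Real
open scoped Topology ENNReal Classical

noncomputable section

inductive MTree (m : ℕ) : Type
  | leaf : MTree m
  | node : (Fin m → MTree m) → MTree m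

namespace MTree

variable {m : ℕ}

def depth : MTree m → ℕ
  | leaf => 0
  | node f => (Finset.univ.sup fun j => depth (f j)) + 1

def numLeaves : MTree m → ℕ
  | leaf => 1
  | node f => ∑ j, numLeaves (f j)

def leavesAtDepth : MTree m → ℕ → ℕ
  | leaf, 0 => 1
  | leaf, _ + 1 => 0
  | node _, 0 => 0
  | node f, d + 1 => ∑ j, leavesAtDepth (f j) d

def nodesAtDepth : MTree m → ℕ → ℕ
  | _, 0 => 1
  | leaf, _ + 1 => 0
  | node f, d + 1 => ∑ j, nodesAtDepth (f j) d

end MTree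

/-- The BCT prior `π_D(T;β) = α^{|T|-1} β^{|T|-L_D(T)}` with `α = (1-β)^{1/(m-1)}`. -/
def priorBCT (m D : ℕ) (β : ℝ) (T : MTree m) : ℝ :=
  ((1 - β) ^ (((m : ℝ) - 1)⁻¹)) ^ (T.numLeaves - 1) * β ^ (T.numLeaves - T.leavesAtDepth D)

/-- Probability that the Galton–Watson process with offspring distribution (β,1-β) on {0,m},
stopped at generation D, produces the tree `T`. -/
def gwStopped {m : ℕ} (β : ℝ) : ℕ → MTree m → ℝ
  | 0, .leaf => 1
  | 0, .node _ => 0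
  | _ + 1, .leaf => β
  | D + 1, .node f => (1 - β) * ∏ j, gwStopped β D (f j)


/-- The weighted probabilities `P_{w,s}`: with remaining depth budget 0 (i.e. at maximal
depth D), `P_{w,s} = P_{e,s}`; otherwise `P_{w,s} = β P_{e,s} + (1-β) ∏_j P_{w,sj}`. -/
def pw {m : ℕ} (β : ℝ) (Pe : List (Fin m) → ℝ) : ℕ → List (Fin m) → ℝ
  | 0, s => Pe s
  | D + 1, s => β * Pe s + (1 - β) * ∏ j, pw β Pe D (s ++ [j])

/-- The branching probabilities `P_{b,s} = β P_{e,s} / P_{w,s}` for contexts of length < D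
(positive remaining budget), with the convention `P_{b,s} = 1` at maximal depth. -/
def pb {m : ℕ} (β : ℝ) (Pe : List (Fin m) → ℝ) : ℕ → List (Fin m) → ℝ
  | 0, _ => 1
  | D + 1, s => β * Pe s / pw β Pe (D + 1) s

/-- `∏_{s ∈ T} P_{e,s}`: product of the estimated probabilities over the leaf contexts of
the tree `T` rooted at context `s`; this is the marginal likelihood `P(x|T)`. -/
def leafProd {m : ℕ} (Pe : List (Fin m) → ℝ) : List (Fin m) → MTree m → ℝ
  | s, .leaf => Pe s
  | s, .node f => ∏ j, leafProd Pe (s ++ [j]) (f j)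

/-- `graft T s` replaces the leaf of `T` reached by the root-to-leaf path `s`
with a node all of whose m children are leaves. -/
def graft {m : ℕ} : MTree m → List (Fin m) → MTree m
  | .leaf, [] => .node fun _ => .leaf
  | .leaf, _ :: _ => .leaf
  | .node f, [] => .node f
  | .node f, j :: rest => .node (Function.update f j (graft (f j) rest))

/-- The context `s` is a leaf of the tree `T`. -/
def isLeafAt {m : ℕ} : MTree m → List (Fin m) → Prop
  | .leaf, [] => True
  | .leaf, _ :: _ => False
  | .node _, [] => False
  | .node f, j :: rest => isLeafAt (f j) rest


section AuxLemmas

variable {m : ℕ}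

lemma sum_update_add' (g : Fin m → ℕ) (i : Fin m) (b : ℕ) :
    (∑ j, Function.update g i b j) + g i = (∑ j, g j) + b := by
  rw [Finset.sum_update_of_mem (Finset.mem_univ i),
    Finset.sum_eq_sum_sdiff_singleton_add (Finset.mem_univ i) g]
  ring

lemma prod_update_mul' (g : Fin m → ℝ) (i : Fin m) (b : ℝ) :
    (∏ j, Function.update g i b j) * g i = (∏ j, g j) * b := by
  rw [Finset.prod_update_of_mem (Finset.mem_univ i),
    Finset.prod_eq_prod_diff_singleton_mul (Finset.mem_univ i) g]
  ring

lemma numLeaves_pos (hm : 0 < m) : ∀ T : MTree m, 0 < T.numLeaves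
  | .leaf => one_pos
  | .node f => by
      simp only [MTree.numLeaves]
      exact Finset.sum_pos (fun i _ => numLeaves_pos hm (f i)) ⟨⟨0, hm⟩, Finset.mem_univ _⟩

lemma leavesAtDepth_le_numLeaves : ∀ (T : MTree m) (d : ℕ), T.leavesAtDepth d ≤ T.numLeaves
  | .leaf, 0 => le_refl 1
  | .leaf, (_ + 1) => by simp [MTree.leavesAtDepth, MTree.numLeaves]
  | .node _, 0 => by simp [MTree.leavesAtDepth]
  | .node f, (d + 1) => by
      simp only [MTree.leavesAtDepth, MTree.numLeaves]
      exact Finset.sum_le_sum fun i _ => leavesAtDepth_le_numLeaves (f i) d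

lemma leavesAtDepth_lt_numLeaves (hm : 0 < m) : ∀ (s : List (Fin m)) (T : MTree m) (d : ℕ),
    isLeafAt T s → s.length ≠ d → T.leavesAtDepth d < T.numLeaves
  | [], .leaf, d, _, hd => by
      obtain ⟨e, rfl⟩ : ∃ e, d = e + 1 := ⟨d - 1, by simp at hd; omega⟩
      simp [MTree.leavesAtDepth, MTree.numLeaves]
  | [], .node _, _, hs, _ => by simp [isLeafAt] at hs
  | (_ :: _), .leaf, _, hs, _ => by simp [isLeafAt] at hs
  | (j :: rest), .node f, 0, _, _ => by
      simp only [MTree.leavesAtDepth, MTree.numLeaves]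
      exact Finset.sum_pos (fun i _ => numLeaves_pos hm (f i)) ⟨j, Finset.mem_univ j⟩
  | (j :: rest), .node f, (d + 1), hs, hd => by
      have hs' : isLeafAt (f j) rest := hs
      simp only [MTree.leavesAtDepth, MTree.numLeaves]
      exact Finset.sum_lt_sum (fun i _ => leavesAtDepth_le_numLeaves (f i) d)
        ⟨j, Finset.mem_univ j, leavesAtDepth_lt_numLeaves hm rest (f j) d hs'
          (by simp only [List.length_cons] at hd; omega)⟩

lemma numLeaves_graft : ∀ (s : List (Fin m)) (T : MTree m), isLeafAt T s →
    (graft T s).numLeaves + 1 = T.numLeaves + m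
  | [], .leaf, _ => by
      simp [graft, MTree.numLeaves, Nat.add_comm]
  | [], .node _, hs => by simp [isLeafAt] at hs
  | (_ :: _), .leaf, hs => by simp [isLeafAt] at hs
  | (j :: rest), .node f, hs => by
      have hs' : isLeafAt (f j) rest := hs
      have IH := numLeaves_graft rest (f j) hs'
      simp only [graft, MTree.numLeaves]
      have key : ∀ i, (Function.update f j (graft (f j) rest) i).numLeaves
          = Function.update (fun i => (f i).numLeaves) j (graft (f j) rest).numLeaves i :=
        fun i => Function.apply_update (fun _ t => MTree.numLeaves t) f j _ i
      simp only [key]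
      have h := sum_update_add' (fun i => (f i).numLeaves) j (graft (f j) rest).numLeaves
      omega

lemma leavesAtDepth_graft_lt : ∀ (s : List (Fin m)) (T : MTree m) (d : ℕ), isLeafAt T s →
    s.length + 1 < d → (graft T s).leavesAtDepth d = T.leavesAtDepth d
  | [], .leaf, d, _, hd => by
      obtain ⟨e, rfl⟩ : ∃ e, d = e + 2 := ⟨d - 2, by omega⟩
      simp [graft, MTree.leavesAtDepth]
  | [], .node _, _, hs, _ => by simp [isLeafAt] at hs
  | (_ :: _), .leaf, _, hs, _ => by simp [isLeafAt] at hs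
  | (j :: rest), .node f, d, hs, hd => by
      have hs' : isLeafAt (f j) rest := hs
      obtain ⟨e, rfl⟩ : ∃ e, d = e + 1 := ⟨d - 1, by omega⟩
      have IH := leavesAtDepth_graft_lt rest (f j) e hs'
        (by simp only [List.length_cons] at hd; omega)
      simp only [graft, MTree.leavesAtDepth]
      have key : ∀ i, (Function.update f j (graft (f j) rest) i).leavesAtDepth e
          = Function.update (fun i => (f i).leavesAtDepth e) j
              ((graft (f j) rest).leavesAtDepth e) i :=
        fun i => Function.apply_update (fun _ t => MTree.leavesAtDepth t e) f j _ i
      simp only [key]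
      have h := sum_update_add' (fun i => (f i).leavesAtDepth e) j
        ((graft (f j) rest).leavesAtDepth e)
      omega

lemma leavesAtDepth_graft_eq : ∀ (s : List (Fin m)) (T : MTree m), isLeafAt T s →
    (graft T s).leavesAtDepth (s.length + 1) = T.leavesAtDepth (s.length + 1) + m
  | [], .leaf, _ => by
      simp [graft, MTree.leavesAtDepth]
  | [], .node _, hs => by simp [isLeafAt] at hs
  | (_ :: _), .leaf, hs => by simp [isLeafAt] at hs
  | (j :: rest), .node f, hs => by
      have hs' : isLeafAt (f j) rest := hs
      have IH := leavesAtDepth_graft_eq rest (f j) hs'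
      simp only [graft, List.length_cons, MTree.leavesAtDepth]
      have key : ∀ i, (Function.update f j (graft (f j) rest) i).leavesAtDepth (rest.length + 1)
          = Function.update (fun i => (f i).leavesAtDepth (rest.length + 1)) j
              ((graft (f j) rest).leavesAtDepth (rest.length + 1)) i :=
        fun i => Function.apply_update (fun _ t => MTree.leavesAtDepth t (rest.length + 1)) f j _ i
      simp only [key]
      have h := sum_update_add' (fun i => (f i).leavesAtDepth (rest.length + 1)) j
        ((graft (f j) rest).leavesAtDepth (rest.length + 1))
      omega

lemma leafProd_pos (Pe : List (Fin m) → ℝ) (hPe : ∀ s, 0 < Pe s) :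
    ∀ (p : List (Fin m)) (T : MTree m), 0 < leafProd Pe p T
  | p, .leaf => hPe p
  | p, .node f => by
      simp only [leafProd]
      exact Finset.prod_pos fun i _ => leafProd_pos Pe hPe (p ++ [i]) (f i)

lemma pw_pos {β : ℝ} (hβ0 : 0 < β) (hβ1 : β < 1) (Pe : List (Fin m) → ℝ)
    (hPe : ∀ s, 0 < Pe s) : ∀ (d : ℕ) (s : List (Fin m)), 0 < pw β Pe d s
  | 0, s => hPe s
  | (d + 1), s => by
      simp only [pw]
      have h1 : 0 < β * Pe s := mul_pos hβ0 (hPe s)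
      have h2 : 0 < (1 - β) * ∏ j, pw β Pe d (s ++ [j]) :=
        mul_pos (by linarith) (Finset.prod_pos fun j _ => pw_pos hβ0 hβ1 Pe hPe d _)
      linarith

lemma leafProd_graft (Pe : List (Fin m) → ℝ) (hPe : ∀ s, 0 < Pe s) :
    ∀ (s p : List (Fin m)) (T : MTree m), isLeafAt T s →
    leafProd Pe p (graft T s) * Pe (p ++ s) = leafProd Pe p T * ∏ j, Pe ((p ++ s) ++ [j])
  | [], p, .leaf, _ => by
      simp [graft, leafProd, mul_comm]
  | [], p, .node _, hs => by simp [isLeafAt] at hs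
  | (_ :: _), p, .leaf, hs => by simp [isLeafAt] at hs
  | (j :: rest), p, .node f, hs => by
      have hs' : isLeafAt (f j) rest := hs
      have IH := leafProd_graft Pe hPe rest (p ++ [j]) (f j) hs'
      have key : ∀ i, leafProd Pe (p ++ [i]) (Function.update f j (graft (f j) rest) i)
          = Function.update (fun i => leafProd Pe (p ++ [i]) (f i)) j
              (leafProd Pe (p ++ [j]) (graft (f j) rest)) i :=
        fun i => Function.apply_update (fun i t => leafProd Pe (p ++ [i]) t) f j _ i
      have hprod := prod_update_mul' (fun i => leafProd Pe (p ++ [i]) (f i)) j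
        (leafProd Pe (p ++ [j]) (graft (f j) rest))
      have hpos : leafProd Pe (p ++ [j]) (f j) ≠ 0 := (leafProd_pos Pe hPe _ _).ne'
      simp only [graft, leafProd, key]
      have happ : p ++ j :: rest = (p ++ [j]) ++ rest := by simp
      rw [happ]
      apply mul_right_cancel₀ hpos
      linear_combination (Pe ((p ++ [j]) ++ rest)) * hprod
        + (∏ i, leafProd Pe (p ++ [i]) (f i)) * IH

end AuxLemmas

/-- posterior odds for adding an m-branch at a leaf s of T.
If T' is obtained from T in T(D) by adding all m children to a leaf s at depth <= D-2, then
pi(T'|x)/pi(T|x) = ((1 - P_{b,s})/P_{b,s}) * prod_j P_{b,sj};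
if instead s is at depth D-1, then pi(T'|x)/pi(T|x) = (1 - P_{b,s})/P_{b,s}.
Here pi(T|x) = prior(T;beta) * prod_{u in T} P_{e,u} / P_{w,root}, and the branching
probabilities P_{b,u} = beta P_{e,u} / P_{w,u} are evaluated with remaining depth budget
D - depth(u). -/
theorem posterior_odds_graft {m : ℕ} (hm : 2 ≤ m) (D : ℕ) (β : ℝ)
    (hβ : β ∈ Set.Ioo (0 : ℝ) 1) (Pe : List (Fin m) → ℝ) (hPe : ∀ s, 0 < Pe s)
    (T : MTree m) (hT : T.depth ≤ D) (s : List (Fin m)) (hs : isLeafAt T s) :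
    (((s.length : ℤ) ≤ (D : ℤ) - 2 →
      (priorBCT m D β (graft T s) * leafProd Pe [] (graft T s) / pw β Pe D []) /
          (priorBCT m D β T * leafProd Pe [] T / pw β Pe D []) =
        ((1 - pb β Pe (D - s.length) s) / pb β Pe (D - s.length) s) *
          ∏ j, pb β Pe (D - s.length - 1) (s ++ [j])) ∧
    ((s.length : ℤ) = (D : ℤ) - 1 →
      (priorBCT m D β (graft T s) * leafProd Pe [] (graft T s) / pw β Pe D []) /
          (priorBCT m D β T * leafProd Pe [] T / pw β Pe D []) =
        (1 - pb β Pe (D - s.length) s) / pb β Pe (D - s.length) s)) := by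
  obtain ⟨hβ0, hβ1⟩ := hβ
  have hβ1' : (0:ℝ) < 1 - β := by linarith
  have hm1 : (1:ℕ) ≤ m := by omega
  have hApow : ((1 - β) ^ (((m : ℝ) - 1)⁻¹)) ^ (m - 1) = 1 - β := by
    rw [← Real.rpow_natCast ((1 - β) ^ (((m:ℝ) - 1)⁻¹)) (m - 1), ← Real.rpow_mul hβ1'.le]
    rw [Nat.cast_sub hm1, Nat.cast_one]
    rw [inv_mul_cancel₀ (by
      have h2 : (2:ℝ) ≤ (m:ℝ) := by exact_mod_cast hm
      linarith), Real.rpow_one]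
  have hαpos : (0:ℝ) < (1 - β) ^ (((m : ℝ) - 1)⁻¹) := Real.rpow_pos_of_pos hβ1' _
  have hn : 1 ≤ T.numLeaves := numLeaves_pos (by omega) T
  have hL : T.leavesAtDepth D ≤ T.numLeaves := leavesAtDepth_le_numLeaves T D
  have hgn : (graft T s).numLeaves + 1 = T.numLeaves + m := numLeaves_graft s T hs
  have hW0 : pw β Pe D [] ≠ 0 := (pw_pos hβ0 hβ1 Pe hPe D []).ne'
  have hLfpos : 0 < leafProd Pe [] T := leafProd_pos Pe hPe [] T
  have hLfne : leafProd Pe [] T ≠ 0 := hLfpos.ne'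
  have hLf := leafProd_graft Pe hPe s [] T hs
  simp only [List.nil_append] at hLf
  have hPpos : 0 < priorBCT m D β T := mul_pos (pow_pos hαpos _) (pow_pos hβ0 _)
  have hPne : priorBCT m D β T ≠ 0 := hPpos.ne'
  have hane : Pe s ≠ 0 := (hPe s).ne'
  have hQpos : (0:ℝ) < ∏ j, Pe (s ++ [j]) := Finset.prod_pos fun j _ => hPe _
  have hQne : (∏ j, Pe (s ++ [j])) ≠ 0 := hQpos.ne'
  have hLf' : leafProd Pe [] (graft T s)
      = leafProd Pe [] T * (∏ j, Pe (s ++ [j])) / Pe s := by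
    field_simp
    linarith [hLf]
  have hβne : β ≠ 0 := hβ0.ne'
  have hβm : β ^ m = β ^ (m - 1) * β := by
    rw [← pow_succ]
    congr 1
    omega
  constructor
  · intro hcase
    have hlen : s.length + 2 ≤ D := by omega
    obtain ⟨k, hk⟩ : ∃ k, D - s.length = k + 2 := ⟨D - s.length - 2, by omega⟩
    have hLD : (graft T s).leavesAtDepth D = T.leavesAtDepth D :=
      leavesAtDepth_graft_lt s T D hs (by omega)
    have hprior : priorBCT m D β (graft T s)
        = priorBCT m D β T * ((1 - β) * β ^ (m - 1)) := by
      unfold priorBCT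
      rw [hLD]
      have e1 : (graft T s).numLeaves - 1 = (T.numLeaves - 1) + (m - 1) := by omega
      have e2 : (graft T s).numLeaves - T.leavesAtDepth D
          = (T.numLeaves - T.leavesAtDepth D) + (m - 1) := by omega
      rw [e1, e2, pow_add, pow_add, hApow]
      ring
    rw [hk]
    have h1 : k + 2 - 1 = k + 1 := by omega
    rw [h1]
    have hpb : pb β Pe (k + 2) s = β * Pe s / pw β Pe (k + 2) s := rfl
    have hWs : pw β Pe (k + 2) s = β * Pe s + (1 - β) * ∏ j, pw β Pe (k + 1) (s ++ [j]) := rfl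
    have hVpos : (0:ℝ) < ∏ j, pw β Pe (k + 1) (s ++ [j]) :=
      Finset.prod_pos fun j _ => pw_pos hβ0 hβ1 Pe hPe _ _
    have hVne : (∏ j, pw β Pe (k + 1) (s ++ [j])) ≠ 0 := hVpos.ne'
    have hWpos : (0:ℝ) < β * Pe s + (1 - β) * ∏ j, pw β Pe (k + 1) (s ++ [j]) := by
      rw [← hWs]; exact pw_pos hβ0 hβ1 Pe hPe _ _
    have hWne : β * Pe s + (1 - β) * (∏ j, pw β Pe (k + 1) (s ++ [j])) ≠ 0 := hWpos.ne'
    have hprodpb : (∏ j, pb β Pe (k + 1) (s ++ [j]))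
        = β ^ m * (∏ j, Pe (s ++ [j])) / ∏ j, pw β Pe (k + 1) (s ++ [j]) := by
      have hpbj : ∀ j : Fin m, pb β Pe (k + 1) (s ++ [j])
          = β * Pe (s ++ [j]) / pw β Pe (k + 1) (s ++ [j]) := fun j => rfl
      simp only [hpbj]
      rw [Finset.prod_div_distrib, Finset.prod_mul_distrib, Finset.prod_const,
        Finset.card_univ, Fintype.card_fin]
    rw [hprior, hpb, hprodpb, hWs, hLf', hβm]
    field_simp
    ring
  · intro hcase
    have hD : D = s.length + 1 := by omega
    have hk : D - s.length = 1 := by omega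
    have hLD : (graft T s).leavesAtDepth D = T.leavesAtDepth D + m := by
      rw [hD]
      exact leavesAtDepth_graft_eq s T hs
    have hLlt : T.leavesAtDepth D < T.numLeaves :=
      leavesAtDepth_lt_numLeaves (by omega) s T D hs (by omega)
    have hprior : priorBCT m D β (graft T s) * β = priorBCT m D β T * (1 - β) := by
      unfold priorBCT
      rw [hLD]
      have e1 : (graft T s).numLeaves - 1 = (T.numLeaves - 1) + (m - 1) := by omega
      have e2 : (graft T s).numLeaves - (T.leavesAtDepth D + m)
          = T.numLeaves - T.leavesAtDepth D - 1 := by omega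
      have e3 : β ^ (T.numLeaves - T.leavesAtDepth D)
          = β ^ (T.numLeaves - T.leavesAtDepth D - 1) * β := by
        rw [← pow_succ]
        congr 1
        omega
      rw [e1, e2, pow_add, hApow, e3]
      ring
    have hprior' : priorBCT m D β (graft T s) = priorBCT m D β T * (1 - β) / β := by
      field_simp
      linarith [hprior]
    rw [hk]
    have hpb : pb β Pe 1 s = β * Pe s / pw β Pe 1 s := rfl
    have hWs : pw β Pe 1 s = β * Pe s + (1 - β) * ∏ j, Pe (s ++ [j]) := rfl
    have hWpos : (0:ℝ) < β * Pe s + (1 - β) * ∏ j, Pe (s ++ [j]) := by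
      rw [← hWs]; exact pw_pos hβ0 hβ1 Pe hPe _ _
    have hWne : β * Pe s + (1 - β) * (∏ j, Pe (s ++ [j])) ≠ 0 := hWpos.ne'
    rw [hprior', hpb, hWs, hLf']
    field_simp
    ring

end
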